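/- Let n ≥ m ≥ k ≥ 1, let g be a tuple of m independent commuting self-adjoint elements of the n-qubit Pauli group, and let L ∈ F_2^{k×m} have full rank. Define the k-tuple Lg whose i-th entry is ∏_{j=1}^m g_j^{L_{ij}}. Then for all y ∈ F_2^k, P(Lg, y) = ∑_{x ∈ F_2^m : Lx = y} P(g, x), where P(·,·) denotes the joint eigenspace projections. -/

import Mathlib

open Matrix

/-- The Pauli matrix `σ₁^u σ₃^v` on `n` qubits, written in the computational basis
indexed by `F_2^n`. -/
noncomputable def PauliMat (n : ℕ) (u v : Fin n → ZMod 2) :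
    Matrix (Fin n → ZMod 2) (Fin n → ZMod 2) ℂ :=
  fun z' z => if z' = z + u then (-1 : ℂ) ^ (v ⬝ᵥ z).val else 0

/-- The joint eigenspace projection `P(g,x) = 2^{−m} ∏_{j=1}^m (I + (−1)^{x_j} g_j)`. -/
noncomputable def pauliProj (n m : ℕ)
    (g : Fin m → Matrix (Fin n → ZMod 2) (Fin n → ZMod 2) ℂ) (x : Fin m → ZMod 2) :
    Matrix (Fin n → ZMod 2) (Fin n → ZMod 2) ℂ :=
  ((2 : ℂ) ^ (-(m : ℤ))) •
    (List.ofFn (fun j : Fin m =>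
      (1 : Matrix (Fin n → ZMod 2) (Fin n → ZMod 2) ℂ) + ((-1 : ℂ) ^ ((x j).val)) • g j)).prod

/-!
Self-adjoint Pauli matrices square to `1`, and the `g j` generate a commutative algebra. There
`Q x = ∏ j, (1 + (-1)^(x j) g j)` satisfies `g j * Q x = (-1)^(x j) Q x`, hence
`(∏ j, g j ^ e j) * Q x = (-1)^(e ⬝ᵥ x) Q x`, so the corresponding product `Q_L y` for the tuple `Lg`
acts on `Q x` by the scalar `∏ i, (1 + (-1)^(y i + (L x) i))`, which is `2^k` if `L x = y` and `0`
otherwise. Multiplying `Q_L y` by the resolution of the identity `∑ x, Q x = 2^m` gives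
`2^m Q_L y = 2^k ∑_{L x = y} Q x`.
-/

lemma zmodTwo_eq_zero_or_eq_one (c : ZMod 2) : c = 0 ∨ c = 1 := by
  revert c; decide

noncomputable def signChar (A : Type*) [CommRing A] : AddChar (ZMod 2) A :=
  AddChar.zmodChar 2 (ζ := (-1 : A)) (by norm_num)

def rowProd {M : Type*} [Monoid M] {k m : ℕ} (L : Matrix (Fin k) (Fin m) (ZMod 2))
    (g : Fin m → M) (i : Fin k) : M :=
  (List.ofFn fun j => g j ^ (L i j).val).prod

lemma rowProd_apply {M : Type*} [CommMonoid M] {k m : ℕ} (L : Matrix (Fin k) (Fin m) (ZMod 2))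
    (g : Fin m → M) (i : Fin k) : rowProd L g i = ∏ j, g j ^ (L i j).val :=
  List.prod_ofFn

lemma map_rowProd {M N F : Type*} [Monoid M] [Monoid N] [FunLike F M N] [MonoidHomClass F M N]
    (f : F) {k m : ℕ} (L : Matrix (Fin k) (Fin m) (ZMod 2)) (g : Fin m → M) :
    (fun i => f (rowProd L g i)) = rowProd L (fun j => f (g j)) := by
  ext i
  simp [rowProd, map_list_prod, List.map_ofFn, Function.comp_def]

section CommRing

variable {A : Type*} [CommRing A]

lemma signChar_apply (c : ZMod 2) : signChar A c = (-1) ^ c.val := rfl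

lemma signChar_one : signChar A 1 = -1 := by
  rw [signChar_apply, ZMod.val_one, pow_one]

lemma signChar_sum {ι : Type*} (s : Finset ι) (f : ι → ZMod 2) :
    signChar A (∑ i ∈ s, f i) = ∏ i ∈ s, signChar A (f i) := by
  have := map_prod (signChar A).toMonoidHom (fun i => Multiplicative.ofAdd (f i)) s
  rwa [← ofAdd_sum] at this

lemma signChar_mul_self (c : ZMod 2) : signChar A c * signChar A c = 1 := by
  rw [← AddChar.map_add_eq_mul, CharTwo.add_self_eq_zero, AddChar.map_zero_eq_one]

lemma one_add_signChar (c : ZMod 2) : 1 + signChar A c = if c = 0 then 2 else 0 := by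
  rcases zmodTwo_eq_zero_or_eq_one c with rfl | rfl
  · rw [AddChar.map_zero_eq_one, if_pos rfl, one_add_one_eq_two]
  · rw [signChar_one, add_neg_cancel, if_neg one_ne_zero]

lemma Finset.prod_mul_eq_of_forall_mul_eq {ι : Type*} (s : Finset ι) {a c : ι → A} {v : A}
    (h : ∀ i ∈ s, a i * v = c i * v) : (∏ i ∈ s, a i) * v = (∏ i ∈ s, c i) * v := by
  classical
  induction s using Finset.induction_on with
  | empty => simp
  | insert i s hi ih =>
    rw [Finset.prod_insert hi, Finset.prod_insert hi, mul_assoc, ih fun j hj => h j (by simp [hj]),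
      mul_left_comm, h i (by simp)]
    ring

variable {m : ℕ}

noncomputable def unnormProj (g : Fin m → A) (x : Fin m → ZMod 2) : A :=
  ∏ j, (1 + signChar A (x j) * g j)

lemma sum_unnormProj (g : Fin m → A) : ∑ x, unnormProj g x = 2 ^ m := by
  have hsum : ∀ j, ∑ c : ZMod 2, (1 + signChar A c * g j) = 2 := fun j => by
    rw [show (Finset.univ : Finset (ZMod 2)) = {0, 1} from rfl, Finset.sum_pair zero_ne_one,
      AddChar.map_zero_eq_one, signChar_one]
    ring
  calc ∑ x, unnormProj g x = ∏ j, ∑ c : ZMod 2, (1 + signChar A c * g j) :=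
        (Fintype.prod_sum fun j (c : ZMod 2) => 1 + signChar A c * g j).symm
    _ = 2 ^ m := by simp only [hsum, Finset.prod_const, Finset.card_univ, Fintype.card_fin]

variable {g : Fin m → A} (hg : ∀ j, g j * g j = 1)
include hg

lemma mul_unnormProj (x : Fin m → ZMod 2) (j : Fin m) :
    g j * unnormProj g x = signChar A (x j) * unnormProj g x := by
  have hfactor : g j * (1 + signChar A (x j) * g j) =
      signChar A (x j) * (1 + signChar A (x j) * g j) := by
    linear_combination signChar A (x j) * hg j - g j * signChar_mul_self (A := A) (x j)
  rw [unnormProj, ← Finset.mul_prod_erase _ _ (Finset.mem_univ j), ← mul_assoc, hfactor, mul_assoc]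

lemma pow_val_mul_unnormProj (x : Fin m → ZMod 2) (j : Fin m) (c : ZMod 2) :
    g j ^ c.val * unnormProj g x = signChar A (c * x j) * unnormProj g x := by
  rcases zmodTwo_eq_zero_or_eq_one c with rfl | rfl
  · rw [ZMod.val_zero, pow_zero, zero_mul, AddChar.map_zero_eq_one]
  · rw [ZMod.val_one, pow_one, one_mul, mul_unnormProj hg]

lemma prod_pow_mul_unnormProj (e x : Fin m → ZMod 2) :
    (∏ j, g j ^ (e j).val) * unnormProj g x = signChar A (e ⬝ᵥ x) * unnormProj g x := by
  rw [dotProduct, signChar_sum]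
  exact Finset.prod_mul_eq_of_forall_mul_eq _ fun j _ => pow_val_mul_unnormProj hg x j (e j)

lemma unnormProj_rowProd_mul_unnormProj {k : ℕ} (L : Matrix (Fin k) (Fin m) (ZMod 2))
    (y : Fin k → ZMod 2) (x : Fin m → ZMod 2) :
    unnormProj (rowProd L g) y * unnormProj g x =
      if L *ᵥ x = y then 2 ^ k * unnormProj g x else 0 := by
  have hfactor : ∀ i, (1 + signChar A (y i) * rowProd L g i) * unnormProj g x =
      (1 + signChar A (y i + (L *ᵥ x) i)) * unnormProj g x := fun i => by
    rw [rowProd_apply, add_mul, mul_assoc, prod_pow_mul_unnormProj hg, AddChar.map_add_eq_mul,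
      add_mul, mul_assoc]
    rfl
  rw [unnormProj, Finset.prod_mul_eq_of_forall_mul_eq _ fun i _ => hfactor i]
  simp only [one_add_signChar, Finset.prod_ite_zero, Finset.prod_const, Finset.card_univ,
    Fintype.card_fin, CharTwo.add_eq_zero, funext_iff, Finset.mem_univ, forall_const,
    eq_comm (a := y _), ite_mul, zero_mul]

lemma two_pow_mul_unnormProj_rowProd {k : ℕ} (L : Matrix (Fin k) (Fin m) (ZMod 2))
    (y : Fin k → ZMod 2) :
    2 ^ m * unnormProj (rowProd L g) y =
      2 ^ k * ∑ x ∈ Finset.univ.filter (fun x => L *ᵥ x = y), unnormProj g x := by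
  calc 2 ^ m * unnormProj (rowProd L g) y = ∑ x, unnormProj (rowProd L g) y * unnormProj g x := by
        rw [← Finset.mul_sum, sum_unnormProj, mul_comm]
    _ = ∑ x, if L *ᵥ x = y then 2 ^ k * unnormProj g x else 0 :=
        Finset.sum_congr rfl fun x _ => unnormProj_rowProd_mul_unnormProj hg L y x
    _ = _ := by rw [← Finset.sum_filter, Finset.mul_sum]

end CommRing

section Algebra

variable (K : Type*) {A B : Type*} [Field K] [Ring A] [Ring B] [Algebra K A] [Algebra K B] {m : ℕ}

/-- On matrices over `ℂ` this is `pauliProj`. -/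
noncomputable def eigenProj (g : Fin m → A) (x : Fin m → ZMod 2) : A :=
  (2 : K) ^ (-(m : ℤ)) • (List.ofFn fun j => 1 + (-1 : K) ^ (x j).val • g j).prod

variable {K}

lemma AlgHom.map_eigenProj (f : B →ₐ[K] A) (g : Fin m → B) (x : Fin m → ZMod 2) :
    f (eigenProj K g x) = eigenProj K (fun j => f (g j)) x := by
  simp [eigenProj, map_list_prod, List.map_ofFn, Function.comp_def]

lemma eigenProj_eq_unnormProj {A : Type*} [CommRing A] [Algebra K A] (g : Fin m → A)
    (x : Fin m → ZMod 2) : eigenProj K g x = (2 : K) ^ (-(m : ℤ)) • unnormProj g x := by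
  simp [eigenProj, unnormProj, List.prod_ofFn, Algebra.smul_def, signChar_apply]

variable [NeZero (2 : K)]

theorem eigenProj_rowProd_of_commRing {A : Type*} [CommRing A] [Algebra K A]
    {g : Fin m → A} (hg : ∀ j, g j * g j = 1) {k : ℕ} (L : Matrix (Fin k) (Fin m) (ZMod 2))
    (y : Fin k → ZMod 2) :
    eigenProj K (rowProd L g) y =
      ∑ x ∈ Finset.univ.filter (fun x => L *ᵥ x = y), eigenProj K g x := by
  have hscaled : (2 : K) ^ m • unnormProj (rowProd L g) y =
      (2 : K) ^ k • ∑ x ∈ Finset.univ.filter (fun x => L *ᵥ x = y), unnormProj g x := by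
    simpa only [Algebra.smul_def, map_pow, map_ofNat] using two_pow_mul_unnormProj_rowProd hg L y
  simp only [eigenProj_eq_unnormProj, ← Finset.smul_sum, _root_.zpow_neg, zpow_natCast]
  rw [inv_smul_eq_iff₀ (pow_ne_zero _ two_ne_zero), smul_comm,
    eq_inv_smul_iff₀ (pow_ne_zero _ two_ne_zero), hscaled]

open scoped IsMulCommutative in
theorem eigenProj_rowProd {g : Fin m → A} (hg : ∀ j, g j * g j = 1)
    (hcomm : ∀ i j, Commute (g i) (g j)) {k : ℕ}
    (L : Matrix (Fin k) (Fin m) (ZMod 2)) (y : Fin k → ZMod 2) :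
    eigenProj K (rowProd L g) y =
      ∑ x ∈ Finset.univ.filter (fun x => L *ᵥ x = y), eigenProj K g x := by
  let S := Algebra.adjoin K (Set.range g)
  have : IsMulCommutative S := Algebra.isMulCommutative_adjoin K <| by
    rintro _ ⟨i, rfl⟩ _ ⟨j, rfl⟩
    exact hcomm i j
  let G : Fin m → S := fun j => ⟨g j, Algebra.subset_adjoin ⟨j, rfl⟩⟩
  have hG := congrArg S.val <|
    eigenProj_rowProd_of_commRing (K := K) (g := G) (fun j => Subtype.ext (hg j)) L y
  rw [AlgHom.map_eigenProj, map_rowProd, map_sum] at hG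
  simp only [AlgHom.map_eigenProj] at hG
  exact hG

end Algebra

lemma PauliMat_conjTranspose_mul_self (n : ℕ) (u v : Fin n → ZMod 2) :
    (PauliMat n u v)ᴴ * PauliMat n u v = 1 := by
  ext z' z
  simp only [mul_apply, conjTranspose_apply, PauliMat, one_apply]
  rw [Finset.sum_eq_single_of_mem (z' + u) (Finset.mem_univ _) fun w _ hw => by simp [hw]]
  by_cases h : z' = z
  · subst h
    simp [← pow_add]
  · simp [h]

lemma star_mul_self_of_mem_fourthRoots {ω : ℂ}
    (hω : ω ∈ ({1, -1, Complex.I, -Complex.I} : Set ℂ)) : star ω * ω = 1 := by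
  rcases hω with rfl | rfl | rfl | rfl <;> simp

theorem stmt11_general (n m k : ℕ) (uu vv : Fin m → (Fin n → ZMod 2)) (ω : Fin m → ℂ)
    (hω : ∀ j, ω j ∈ ({1, -1, Complex.I, -Complex.I} : Set ℂ))
    (g : Fin m → Matrix (Fin n → ZMod 2) (Fin n → ZMod 2) ℂ)
    (hg : ∀ j, g j = ω j • PauliMat n (uu j) (vv j))
    (hsa : ∀ j, (g j)ᴴ = g j)
    (hcomm : ∀ i j, g i * g j = g j * g i)
    (L : Matrix (Fin k) (Fin m) (ZMod 2))
    (y : Fin k → ZMod 2) :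
    pauliProj n k
        (fun i : Fin k => (List.ofFn (fun j : Fin m => g j ^ (L i j).val)).prod) y
      = ∑ x ∈ Finset.univ.filter (fun x : Fin m → ZMod 2 => L.mulVec x = y),
          pauliProj n m g x := by
  have hg2 : ∀ j, g j * g j = 1 := fun j => calc
    g j * g j = (g j)ᴴ * g j := by rw [hsa j]
    _ = (star (ω j) * ω j) • ((PauliMat n (uu j) (vv j))ᴴ * PauliMat n (uu j) (vv j)) := by
      rw [hg j, conjTranspose_smul, smul_mul_smul_comm]
    _ = 1 := by
      rw [star_mul_self_of_mem_fourthRoots (hω j), PauliMat_conjTranspose_mul_self, one_smul]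
  exact eigenProj_rowProd hg2 hcomm L y

/-- Let `n ≥ m ≥ k ≥ 1`, let `g` be a tuple of `m` independent commuting
self-adjoint elements of the `n`-qubit Pauli group, and let `L ∈ F_2^{k×m}` have full
rank.  With `(Lg)_i = ∏_{j=1}^m g_j^{L_{ij}}`, for all `y ∈ F_2^k`:
`P(Lg, y) = ∑_{x ∈ F_2^m : Lx = y} P(g, x)`. -/
theorem stmt11 (n m k : ℕ) (hk : 1 ≤ k) (hkm : k ≤ m) (hmn : m ≤ n)
    (uu vv : Fin m → (Fin n → ZMod 2)) (ω : Fin m → ℂ)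
    (hω : ∀ j, ω j ∈ ({1, -1, Complex.I, -Complex.I} : Set ℂ))
    (g : Fin m → Matrix (Fin n → ZMod 2) (Fin n → ZMod 2) ℂ)
    (hg : ∀ j, g j = ω j • PauliMat n (uu j) (vv j))
    (hsa : ∀ j, (g j)ᴴ = g j)
    (hcomm : ∀ i j, g i * g j = g j * g i)
    (hind : LinearIndependent (ZMod 2)
      (fun j : Fin m => ((uu j, vv j) : (Fin n → ZMod 2) × (Fin n → ZMod 2))))
    (L : Matrix (Fin k) (Fin m) (ZMod 2)) (hL : L.rank = k)
    (y : Fin k → ZMod 2) :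
    pauliProj n k
        (fun i : Fin k => (List.ofFn (fun j : Fin m => g j ^ (L i j).val)).prod) y
      = ∑ x ∈ Finset.univ.filter (fun x : Fin m → ZMod 2 => L.mulVec x = y),
          pauliProj n m g x :=
  stmt11_general n m k uu vv ω hω g hg hsa hcomm L y
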